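/- In the Drinfel'd double D(A) of a finite-dimensional odd BV unital infinitesimal bialgebra with λη = 0, the element 𝛆 ∈ D(A)^∨ defined by 𝛆(a + α) = ev(η ⊗ ωα) for a ∈ A, α ∈ A^∨[1] is a counit for the coproduct 𝛌: (𝛆⊗1)𝛌 = 1 and (1⊗𝛆)𝛌 = -1. -/

import Mathlib

/-!
Common framework: a "super" (parity-graded) module `A` over a field `R`, with parity
operator `ι = (-1)^deg`, Koszul twist `τ` on `A ⊗ A`, product `mul = μ`, unit `e = η(1)`,
coproduct `cop = λ` (of odd degree) and BV operator `d = Δ` (of degree 1).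
Operators such as `1⊗Δ`, `1⊗λ`, `1⊗Δ⊗1`, … carry Koszul signs, implemented by
inserting the parity operator `ι` on the tensor factors to the left of the odd map.
Triple tensor products are written with the right-associated bracketing `A ⊗ (A ⊗ A)`.
-/

open TensorProduct

noncomputable section

variable {R : Type*} [Field R] {A : Type*} [AddCommGroup A] [Module R A]

/-- Data of a (parity-)graded module with product, unit, coproduct and BV operator:
`ι` is the parity operator `(-1)^deg`, `τ` is the Koszul twist `a⊗b ↦ (-1)^{|a||b|} b⊗a`. -/
structure BVData (R : Type*) (A : Type*) [Field R] [AddCommGroup A] [Module R A] where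
  /-- the parity operator `(-1)^deg` -/
  ι : A →ₗ[R] A
  /-- the Koszul twist `τ` -/
  τ : A ⊗[R] A →ₗ[R] A ⊗[R] A
  /-- the product `μ`, of degree 0 -/
  mul : A ⊗[R] A →ₗ[R] A
  /-- the unit `e = η(1)` -/
  e : A
  /-- the coproduct `λ`, of odd degree -/
  cop : A →ₗ[R] A ⊗[R] A
  /-- the BV operator `Δ`, of degree 1 -/
  d : A →ₗ[R] A

namespace BVData

variable (D : BVData R A)

/-- `τ ⊗ 1` on `A ⊗ (A ⊗ A)` -/
def t12 : A ⊗[R] (A ⊗[R] A) →ₗ[R] A ⊗[R] (A ⊗[R] A) :=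
  (TensorProduct.assoc R A A A).toLinearMap ∘ₗ
    map D.τ (LinearMap.id : A →ₗ[R] A) ∘ₗ (TensorProduct.assoc R A A A).symm.toLinearMap

/-- `1 ⊗ τ` on `A ⊗ (A ⊗ A)` -/
def t23 : A ⊗[R] (A ⊗[R] A) →ₗ[R] A ⊗[R] (A ⊗[R] A) :=
  map (LinearMap.id : A →ₗ[R] A) D.τ

/-- the cyclic permutation `σ = (τ⊗1)(1⊗τ)` -/
def sig : A ⊗[R] (A ⊗[R] A) →ₗ[R] A ⊗[R] (A ⊗[R] A) := D.t12 ∘ₗ D.t23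

/-- `1 + σ + σ²` -/
def cyc : A ⊗[R] (A ⊗[R] A) →ₗ[R] A ⊗[R] (A ⊗[R] A) :=
  LinearMap.id + D.sig + D.sig ∘ₗ D.sig

/-- `μ ⊗ 1` -/
def mulL : A ⊗[R] (A ⊗[R] A) →ₗ[R] A ⊗[R] A :=
  map D.mul (LinearMap.id : A →ₗ[R] A) ∘ₗ (TensorProduct.assoc R A A A).symm.toLinearMap

/-- `1 ⊗ μ` (no Koszul sign: `μ` is even) -/
def mulR : A ⊗[R] (A ⊗[R] A) →ₗ[R] A ⊗[R] A :=
  map (LinearMap.id : A →ₗ[R] A) D.mul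

/-- `λ ⊗ 1` -/
def copL : A ⊗[R] A →ₗ[R] A ⊗[R] (A ⊗[R] A) :=
  (TensorProduct.assoc R A A A).toLinearMap ∘ₗ map D.cop (LinearMap.id : A →ₗ[R] A)

/-- `1 ⊗ λ` (with Koszul sign: `λ` is odd) -/
def copR : A ⊗[R] A →ₗ[R] A ⊗[R] (A ⊗[R] A) := map D.ι D.cop

/-- `Δ ⊗ 1` -/
def dL : A ⊗[R] A →ₗ[R] A ⊗[R] A := map D.d (LinearMap.id : A →ₗ[R] A)

/-- `1 ⊗ Δ` (with Koszul sign) -/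
def dR : A ⊗[R] A →ₗ[R] A ⊗[R] A := map D.ι D.d

/-- `Δ ⊗ 1 ⊗ 1` -/
def d1 : A ⊗[R] (A ⊗[R] A) →ₗ[R] A ⊗[R] (A ⊗[R] A) :=
  map D.d (LinearMap.id : A ⊗[R] A →ₗ[R] A ⊗[R] A)

/-- `1 ⊗ Δ ⊗ 1` (with Koszul sign) -/
def d2 : A ⊗[R] (A ⊗[R] A) →ₗ[R] A ⊗[R] (A ⊗[R] A) :=
  map D.ι (map D.d (LinearMap.id : A →ₗ[R] A))

/-- `1 ⊗ 1 ⊗ Δ` (with Koszul sign) -/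
def d3 : A ⊗[R] (A ⊗[R] A) →ₗ[R] A ⊗[R] (A ⊗[R] A) :=
  map D.ι (map D.ι D.d)

/-- the copairing `λη = λ(η(1))` -/
def copair : A ⊗[R] A := D.cop D.e

/-- `(Δμ) ⊗ 1` -/
def dmul1 : A ⊗[R] (A ⊗[R] A) →ₗ[R] A ⊗[R] A :=
  map (D.d ∘ₗ D.mul) (LinearMap.id : A →ₗ[R] A)
    ∘ₗ (TensorProduct.assoc R A A A).symm.toLinearMap

/-- `(λΔ) ⊗ 1` -/
def copd1 : A ⊗[R] A →ₗ[R] A ⊗[R] (A ⊗[R] A) :=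
  (TensorProduct.assoc R A A A).toLinearMap
    ∘ₗ map (D.cop ∘ₗ D.d) (LinearMap.id : A →ₗ[R] A)

/-- the BV bracket `β = [Δ, μ] = Δμ - μ(Δ⊗1) - μ(1⊗Δ)` (degree 1) -/
def bracket : A ⊗[R] A →ₗ[R] A :=
  D.d ∘ₗ D.mul - D.mul ∘ₗ D.dL - D.mul ∘ₗ D.dR

/-- the BV cobracket `γ = [Δ, λ] = λΔ + (Δ⊗1)λ + (1⊗Δ)λ` (even degree) -/
def cobracket : A →ₗ[R] A ⊗[R] A :=
  D.cop ∘ₗ D.d + D.dL ∘ₗ D.cop + D.dR ∘ₗ D.cop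

/-- `β ⊗ 1` -/
def braL : A ⊗[R] (A ⊗[R] A) →ₗ[R] A ⊗[R] A :=
  map D.bracket (LinearMap.id : A →ₗ[R] A)
    ∘ₗ (TensorProduct.assoc R A A A).symm.toLinearMap

/-- `1 ⊗ β` (with Koszul sign: `β` is odd) -/
def braR : A ⊗[R] (A ⊗[R] A) →ₗ[R] A ⊗[R] A := map D.ι D.bracket

/-- `γ ⊗ 1` -/
def cobraL : A ⊗[R] A →ₗ[R] A ⊗[R] (A ⊗[R] A) :=
  (TensorProduct.assoc R A A A).toLinearMap
    ∘ₗ map D.cobracket (LinearMap.id : A →ₗ[R] A)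

/-- `1 ⊗ γ` (no Koszul sign: `γ` is even) -/
def cobraR : A ⊗[R] A →ₗ[R] A ⊗[R] (A ⊗[R] A) :=
  map (LinearMap.id : A →ₗ[R] A) D.cobracket

end BVData

/-- `(f ⊗ g)(1 ⊗ c ⊗ 1)` where `c ∈ A ⊗ A` is inserted in the middle and `s` is the
Koszul sign operator acting on the first slot:
`a ⊗ b ↦ Σ f(s(a) ⊗ c') ⊗ g(c'' ⊗ b)` for `c = Σ c' ⊗ c''`. -/
noncomputable def insertMid (f g : A ⊗[R] A →ₗ[R] A) (s : A →ₗ[R] A) (c : A ⊗[R] A) :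
    A ⊗[R] A →ₗ[R] A ⊗[R] A :=
  map f g
    ∘ₗ (TensorProduct.assoc R A A (A ⊗[R] A)).symm.toLinearMap
    ∘ₗ map (LinearMap.id : A →ₗ[R] A) (TensorProduct.assoc R A A A).toLinearMap
    ∘ₗ map s (TensorProduct.mk R (A ⊗[R] A) A c)

/-- Background axioms of the grading: `ι` is the parity involution, `τ` the Koszul twist;
`μ` and `η` are even, `λ` and `Δ` are odd. -/
structure IsGraded (D : BVData R A) : Prop where
  invol : D.ι ∘ₗ D.ι = LinearMap.id
  tausq : D.τ ∘ₗ D.τ = LinearMap.id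
  tau_parity : D.τ ∘ₗ map D.ι D.ι = map D.ι D.ι ∘ₗ D.τ
  tau_nat_iota : D.τ ∘ₗ map D.ι (LinearMap.id : A →ₗ[R] A)
      = map (LinearMap.id : A →ₗ[R] A) D.ι ∘ₗ D.τ
  tau_nat_d : D.τ ∘ₗ D.dL = D.dR ∘ₗ D.τ
  mul_even : D.ι ∘ₗ D.mul = D.mul ∘ₗ map D.ι D.ι
  unit_even : D.ι D.e = D.e
  cop_odd : map D.ι D.ι ∘ₗ D.cop = -(D.cop ∘ₗ D.ι)
  d_odd : D.ι ∘ₗ D.d = -(D.d ∘ₗ D.ι)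

/-- The axioms of an odd BV unital infinitesimal bialgebra. -/
structure IsBVui (D : BVData R A) extends IsGraded D : Prop where
  mul_assoc : D.mul ∘ₗ D.mulL = D.mul ∘ₗ D.mulR
  mul_comm : D.mul ∘ₗ D.τ = D.mul
  unit_mul : ∀ a : A, D.mul (D.e ⊗ₜ[R] a) = a
  mul_unit : ∀ a : A, D.mul (a ⊗ₜ[R] D.e) = a
  cop_coassoc : D.copL ∘ₗ D.cop = -(D.copR ∘ₗ D.cop)
  cop_cocomm : D.τ ∘ₗ D.cop = -D.cop
  d_squared : D.d ∘ₗ D.d = 0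
  /-- the unital infinitesimal relation
  `λμ = (1⊗μ)(λ⊗1) + (μ⊗1)(1⊗λ) - (μ⊗μ)(1⊗λη⊗1)` -/
  unital_infinitesimal :
    D.cop ∘ₗ D.mul =
      D.mulR ∘ₗ D.copL + D.mulL ∘ₗ D.copR - insertMid D.mul D.mul D.ι D.copair
  /-- the 7-term relation for `Δ` and `μ`:
  `Δμ(μ⊗1) = [μ(Δμ⊗1) - μ(μ⊗1)(Δ⊗1⊗1)](1+σ+σ²)` -/
  seven_mul :
    D.d ∘ₗ D.mul ∘ₗ D.mulL =
      (D.mul ∘ₗ D.dmul1 - D.mul ∘ₗ D.mulL ∘ₗ D.d1) ∘ₗ D.cyc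
  /-- the 7-term relation for `Δ` and `λ`:
  `(λ⊗1)λΔ = -(1+σ+σ²)[(Δ⊗1⊗1)(λ⊗1)λ + (λΔ⊗1)λ]` -/
  seven_cop :
    D.copL ∘ₗ D.cop ∘ₗ D.d =
      -(D.cyc ∘ₗ (D.d1 ∘ₗ D.copL ∘ₗ D.cop + D.copd1 ∘ₗ D.cop))
  /-- the 11-term relation for `Δ`, `μ`, `λ` and `η` -/
  eleven :
    D.cop ∘ₗ D.d ∘ₗ D.mul =
      D.cop ∘ₗ D.mul ∘ₗ D.dL + D.cop ∘ₗ D.mul ∘ₗ D.dR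
      - D.dL ∘ₗ D.cop ∘ₗ D.mul - D.dR ∘ₗ D.cop ∘ₗ D.mul
      + D.mulL ∘ₗ D.d2 ∘ₗ D.copR ∘ₗ (LinearMap.id + D.τ)
      + D.mulR ∘ₗ D.d2 ∘ₗ D.copL ∘ₗ (LinearMap.id + D.τ)
      - insertMid D.mul D.mul (D.ι ∘ₗ D.ι) (D.dR D.copair) ∘ₗ (LinearMap.id + D.τ)

/-- The axioms of an odd (BV) Frobenius algebra, without the BV Frobenius relation:
`(A, μ, λ, η, ε)` is a graded Frobenius algebra with `|μ| = 0` and `|λ|` odd,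
and `(A, μ, η, Δ)` is a BV algebra. -/
structure IsBVFrobCore (D : BVData R A) (ε : A →ₗ[R] R) extends IsGraded D : Prop where
  eps_odd : ε ∘ₗ D.ι = -ε
  mul_assoc : D.mul ∘ₗ D.mulL = D.mul ∘ₗ D.mulR
  mul_comm : D.mul ∘ₗ D.τ = D.mul
  unit_mul : ∀ a : A, D.mul (D.e ⊗ₜ[R] a) = a
  mul_unit : ∀ a : A, D.mul (a ⊗ₜ[R] D.e) = a
  cop_coassoc : D.copL ∘ₗ D.cop = -(D.copR ∘ₗ D.cop)
  cop_cocomm : D.τ ∘ₗ D.cop = -D.cop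
  /-- `(ε⊗1)λ = 1` -/
  counit_l : (TensorProduct.lid R A).toLinearMap ∘ₗ
      map ε (LinearMap.id : A →ₗ[R] A) ∘ₗ D.cop = LinearMap.id
  /-- `(1⊗ε)λ = -1` (with Koszul sign) -/
  counit_r : (TensorProduct.rid R A).toLinearMap ∘ₗ map D.ι ε ∘ₗ D.cop = -LinearMap.id
  /-- the Frobenius relation `λμ = (μ⊗1)(1⊗λ)` -/
  frobenius_l : D.cop ∘ₗ D.mul = D.mulL ∘ₗ D.copR
  /-- the Frobenius relation `λμ = (1⊗μ)(λ⊗1)` -/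
  frobenius_r : D.cop ∘ₗ D.mul = D.mulR ∘ₗ D.copL
  d_squared : D.d ∘ₗ D.d = 0
  /-- the 7-term relation for `Δ` and `μ` -/
  seven_mul :
    D.d ∘ₗ D.mul ∘ₗ D.mulL =
      (D.mul ∘ₗ D.dmul1 - D.mul ∘ₗ D.mulL ∘ₗ D.d1) ∘ₗ D.cyc

/-- The axioms of an odd BV Frobenius algebra. -/
structure IsBVFrob (D : BVData R A) (ε : A →ₗ[R] R) extends IsBVFrobCore D ε : Prop where
  /-- the BV Frobenius relation `(Δ⊗1)λη = (1⊗Δ)λη` -/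
  bv_frobenius : D.dL D.copair = D.dR D.copair

/-! ### The Drinfel'd double `D(A) = A ⊕ A^∨[1]`

We take `|λ| = -1` (only the parity of `|λ|` matters), so the double is
`D(A) = A ⊕ A^∨[1]`.  The underlying module of `A^∨[1]` is `Module.Dual R A`; the shift
maps `s : A^∨ → A^∨[1]` and `ω : A^∨[1] → A^∨` are the identity on underlying elements
and only affect the Koszul signs, which are implemented by inserting the parity operators
`ι` of `A` and `ιV = ι^∨` of `A^∨`.  The Koszul twist between graded pieces is built from
the parity projections `pe` (even part) and `po` (odd part) of `A`. -/

namespace BVData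

variable {R : Type*} [Field R] {A : Type*} [AddCommGroup A] [Module R A]
variable [FiniteDimensional R A] (D : BVData R A)

/-- the parity operator on `A^∨` -/
noncomputable def ιV : Module.Dual R A →ₗ[R] Module.Dual R A := D.ι.dualMap

/-- the Koszul-signed evaluation `ev ∘ τ : A ⊗ A^∨ → R`,
`x ⊗ φ ↦ (-1)^{|x||φ|} φ(x)` -/
noncomputable def evt : A ⊗[R] Module.Dual R A →ₗ[R] R :=
  contractRight R A ∘ₗ
    map D.ι (LinearMap.id : Module.Dual R A →ₗ[R] Module.Dual R A)

/-- the Koszul-twisted coevaluation element `τ(coev(1)) ∈ A^∨ ⊗ A` -/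
noncomputable def tcoev1 : Module.Dual R A ⊗[R] A :=
  (TensorProduct.comm R A (Module.Dual R A))
    ((map D.ι (LinearMap.id : Module.Dual R A →ₗ[R] Module.Dual R A)) (coevaluation R A 1))

/-- the product component `A^∨[1] ⊗ A → A`:  `-(ev⊗1)(1⊗λ)(ω⊗1)` -/
noncomputable def mVAA : Module.Dual R A ⊗[R] A →ₗ[R] A :=
  -((TensorProduct.lid R A).toLinearMap
    ∘ₗ map (contractLeft R A) (LinearMap.id : A →ₗ[R] A)
    ∘ₗ (TensorProduct.assoc R (Module.Dual R A) A A).symm.toLinearMap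
    ∘ₗ map D.ιV D.cop)

/-- the product component `A ⊗ A^∨[1] → A`:  `(1⊗(ev τ))(λ⊗1)(1⊗ω)` -/
noncomputable def mAVA : A ⊗[R] Module.Dual R A →ₗ[R] A :=
  (TensorProduct.rid R A).toLinearMap
    ∘ₗ map (LinearMap.id : A →ₗ[R] A) D.evt
    ∘ₗ (TensorProduct.assoc R A A (Module.Dual R A)).toLinearMap
    ∘ₗ map (D.cop ∘ₗ D.ι)
        (LinearMap.id : Module.Dual R A →ₗ[R] Module.Dual R A)

/-- the product component `A^∨[1] ⊗ A → A^∨[1]`: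
`s(ev⊗1)(1⊗μ⊗1)(1⊗1⊗coev)(ω⊗1)`  (equivalently `s(1⊗ev)(μ^∨⊗1)(ω⊗1)`) -/
noncomputable def mVAV : Module.Dual R A ⊗[R] A →ₗ[R] Module.Dual R A :=
  (TensorProduct.lid R (Module.Dual R A)).toLinearMap
    ∘ₗ map (contractLeft R A)
        (LinearMap.id : Module.Dual R A →ₗ[R] Module.Dual R A)
    ∘ₗ (TensorProduct.assoc R (Module.Dual R A) A (Module.Dual R A)).symm.toLinearMap
    ∘ₗ map (LinearMap.id : Module.Dual R A →ₗ[R] Module.Dual R A)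
        (map D.mul (LinearMap.id : Module.Dual R A →ₗ[R] Module.Dual R A)
          ∘ₗ (TensorProduct.assoc R A A (Module.Dual R A)).symm.toLinearMap
          ∘ₗ (TensorProduct.mk R A (A ⊗[R] Module.Dual R A)).flip (coevaluation R A 1))

/-- the product component `A ⊗ A^∨[1] → A^∨[1]`:
`s(1⊗(ev τ))(1⊗μ⊗1)((τ coev)⊗1⊗1)(1⊗ω)`  (equivalently `s((ev τ)⊗1)(1⊗μ^∨)(1⊗ω)`) -/
noncomputable def mAVV : A ⊗[R] Module.Dual R A →ₗ[R] Module.Dual R A :=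
  (TensorProduct.rid R (Module.Dual R A)).toLinearMap
    ∘ₗ map (LinearMap.id : Module.Dual R A →ₗ[R] Module.Dual R A)
        (D.evt
          ∘ₗ map D.mul (LinearMap.id : Module.Dual R A →ₗ[R] Module.Dual R A)
          ∘ₗ (TensorProduct.assoc R A A (Module.Dual R A)).symm.toLinearMap)
    ∘ₗ (TensorProduct.assoc R (Module.Dual R A) A
        (A ⊗[R] Module.Dual R A)).toLinearMap
    ∘ₗ TensorProduct.mk R (Module.Dual R A ⊗[R] A) (A ⊗[R] Module.Dual R A) D.tcoev1
    ∘ₗ map D.ι (LinearMap.id : Module.Dual R A →ₗ[R] Module.Dual R A)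

/-- the Koszul sign operator `φ ⊗ ψ ↦ (-1)^{|φ||ψ|} φ ⊗ ψ` on `A^∨ ⊗ A^∨`, built from the
parity projections `pe`, `po` of `A` -/
noncomputable def kVV (pe po : A →ₗ[R] A) :
    Module.Dual R A ⊗[R] Module.Dual R A →ₗ[R] Module.Dual R A ⊗[R] Module.Dual R A :=
  map pe.dualMap (LinearMap.id : Module.Dual R A →ₗ[R] Module.Dual R A)
    + map po.dualMap D.ιV

/-- `λ^∨ : (A⊗A)^∨ → A^∨` with the Koszul sign (`λ` is odd): `Φ ↦ (-1)^{|Φ|} Φ ∘ λ` -/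
noncomputable def copdual : Module.Dual R (A ⊗[R] A) →ₗ[R] Module.Dual R A :=
  D.cop.dualMap ∘ₗ (map D.ι D.ι).dualMap

/-- the product component `A^∨[1] ⊗ A^∨[1] → A^∨[1]`: `s λ^∨ (ω⊗ω)`, using the Koszul
identification `A^∨ ⊗ A^∨ ≅ (A⊗A)^∨` -/
noncomputable def mVV (pe po : A →ₗ[R] A) :
    Module.Dual R A ⊗[R] Module.Dual R A →ₗ[R] Module.Dual R A :=
  -(D.copdual ∘ₗ TensorProduct.dualDistrib R A A ∘ₗ D.kVV pe po
    ∘ₗ map D.ιV (LinearMap.id : Module.Dual R A →ₗ[R] Module.Dual R A))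

/-- the Drinfel'd double product `𝛍` on `D(A) = A ⊕ A^∨[1]`: its components are `μ` on
`A⊗A`, `sλ^∨(ω⊗ω)` on the shifted dual, and the mixed terms obtained via evaluation and
coevaluation; the components `A⊗A → A^∨[1]` and `A^∨[1]⊗A^∨[1] → A` vanish. -/
noncomputable def dmul (pe po : A →ₗ[R] A) :
    (A × Module.Dual R A) ⊗[R] (A × Module.Dual R A) →ₗ[R] A × Module.Dual R A :=
  LinearMap.inl R A (Module.Dual R A) ∘ₗ D.mul
      ∘ₗ map (LinearMap.fst R A (Module.Dual R A)) (LinearMap.fst R A (Module.Dual R A))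
  + LinearMap.inl R A (Module.Dual R A) ∘ₗ D.mVAA
      ∘ₗ map (LinearMap.snd R A (Module.Dual R A)) (LinearMap.fst R A (Module.Dual R A))
  + LinearMap.inl R A (Module.Dual R A) ∘ₗ D.mAVA
      ∘ₗ map (LinearMap.fst R A (Module.Dual R A)) (LinearMap.snd R A (Module.Dual R A))
  + LinearMap.inr R A (Module.Dual R A) ∘ₗ D.mVV pe po
      ∘ₗ map (LinearMap.snd R A (Module.Dual R A)) (LinearMap.snd R A (Module.Dual R A))
  + LinearMap.inr R A (Module.Dual R A) ∘ₗ D.mVAV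
      ∘ₗ map (LinearMap.snd R A (Module.Dual R A)) (LinearMap.fst R A (Module.Dual R A))
  + LinearMap.inr R A (Module.Dual R A) ∘ₗ D.mAVV
      ∘ₗ map (LinearMap.fst R A (Module.Dual R A)) (LinearMap.snd R A (Module.Dual R A))

end BVData

namespace BVData

variable {R : Type*} [Field R] {A : Type*} [AddCommGroup A] [Module R A]
variable [FiniteDimensional R A] (D : BVData R A)

/-- the parity operator on the double `D(A) = A ⊕ A^∨[1]` (the shift flips parity) -/
noncomputable def ιW : (A × Module.Dual R A) →ₗ[R] A × Module.Dual R A :=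
  LinearMap.prodMap D.ι (-D.ιV)

/-- the Koszul twist on `D(A) ⊗ D(A)` -/
noncomputable def tauW (pe po : A →ₗ[R] A) :
    (A × Module.Dual R A) ⊗[R] (A × Module.Dual R A) →ₗ[R]
      (A × Module.Dual R A) ⊗[R] (A × Module.Dual R A) :=
  (TensorProduct.comm R (A × Module.Dual R A) (A × Module.Dual R A)).toLinearMap
    ∘ₗ (map (LinearMap.prodMap pe po.dualMap)
          (LinearMap.id : A × Module.Dual R A →ₗ[R] A × Module.Dual R A)
        + map (LinearMap.prodMap po pe.dualMap) (D.ιW))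

/-- the BV operator `𝚫 = diag(Δ, -sΔ^∨ω)` on the double, where `Δ^∨` is defined by the
adjunction `ev(Δ^∨⊗1) = ev(1⊗Δ)`, i.e. `Δ^∨φ = (-1)^{|φ|} φ∘Δ` -/
noncomputable def bDelta : (A × Module.Dual R A) →ₗ[R] A × Module.Dual R A :=
  LinearMap.prodMap D.d (-(D.d.dualMap ∘ₗ D.ιV))

/-- the element `𝛌𝛈 = -(1⊗s)coev + τ(1⊗s)coev ∈ D(A) ⊗ D(A)` -/
noncomputable def lamEtaW (pe po : A →ₗ[R] A) :
    (A × Module.Dual R A) ⊗[R] (A × Module.Dual R A) :=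
  -(map (LinearMap.inl R A (Module.Dual R A)) (LinearMap.inr R A (Module.Dual R A)))
      ((map D.ι (LinearMap.id : Module.Dual R A →ₗ[R] Module.Dual R A))
        (coevaluation R A 1))
  + D.tauW pe po
      ((map (LinearMap.inl R A (Module.Dual R A)) (LinearMap.inr R A (Module.Dual R A)))
        ((map D.ι (LinearMap.id : Module.Dual R A →ₗ[R] Module.Dual R A))
          (coevaluation R A 1)))

end BVData

namespace BVData

variable {R : Type*} [Field R] {A : Type*} [AddCommGroup A] [Module R A]
variable [FiniteDimensional R A] (D : BVData R A)

/-- the coproduct component `A → A ⊗ A^∨[1]`:  `-(1⊗s)(μ⊗1)(1⊗coev)` -/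
noncomputable def coAAV : A →ₗ[R] A ⊗[R] Module.Dual R A :=
  map (-D.ι) (LinearMap.id : Module.Dual R A →ₗ[R] Module.Dual R A)
    ∘ₗ map D.mul (LinearMap.id : Module.Dual R A →ₗ[R] Module.Dual R A)
    ∘ₗ (TensorProduct.assoc R A A (Module.Dual R A)).symm.toLinearMap
    ∘ₗ (TensorProduct.mk R A (A ⊗[R] Module.Dual R A)).flip (coevaluation R A 1)

/-- the coproduct component `A → A^∨[1] ⊗ A`:  `(s⊗1)(1⊗μ)((τ coev)⊗1)` -/
noncomputable def coAVA : A →ₗ[R] Module.Dual R A ⊗[R] A :=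
  map (LinearMap.id : Module.Dual R A →ₗ[R] Module.Dual R A) D.mul
    ∘ₗ (TensorProduct.assoc R (Module.Dual R A) A A).toLinearMap
    ∘ₗ TensorProduct.mk R (Module.Dual R A ⊗[R] A) A D.tcoev1

/-- the coproduct component `A^∨[1] → A ⊗ A^∨[1]`:
`(1⊗s)(ev⊗1⊗1)(1⊗λ⊗1)(1⊗coev)ω` -/
noncomputable def coVAV : Module.Dual R A →ₗ[R] A ⊗[R] Module.Dual R A :=
  map D.ι (LinearMap.id : Module.Dual R A →ₗ[R] Module.Dual R A)
    ∘ₗ (TensorProduct.lid R (A ⊗[R] Module.Dual R A)).toLinearMap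
    ∘ₗ map (contractLeft R A)
        (LinearMap.id : A ⊗[R] Module.Dual R A →ₗ[R] A ⊗[R] Module.Dual R A)
    ∘ₗ (TensorProduct.assoc R (Module.Dual R A) A
          (A ⊗[R] Module.Dual R A)).symm.toLinearMap
    ∘ₗ map (LinearMap.id : Module.Dual R A →ₗ[R] Module.Dual R A)
        (TensorProduct.assoc R A A (Module.Dual R A)).toLinearMap
    ∘ₗ map D.ιV (map D.cop (LinearMap.id : Module.Dual R A →ₗ[R] Module.Dual R A))
    ∘ₗ (TensorProduct.mk R (Module.Dual R A) (A ⊗[R] Module.Dual R A)).flip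
        (coevaluation R A 1)

/-- the coproduct component `A^∨[1] → A^∨[1] ⊗ A`:
`(s⊗1)(1⊗1⊗(ev τ))(1⊗λ⊗1)((τ coev)⊗1)ω` -/
noncomputable def coVVA : Module.Dual R A →ₗ[R] Module.Dual R A ⊗[R] A :=
  map (LinearMap.id : Module.Dual R A →ₗ[R] Module.Dual R A)
      ((TensorProduct.rid R A).toLinearMap
        ∘ₗ map (LinearMap.id : A →ₗ[R] A) D.evt
        ∘ₗ (TensorProduct.assoc R A A (Module.Dual R A)).toLinearMap)
    ∘ₗ (TensorProduct.assoc R (Module.Dual R A) (A ⊗[R] A)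
        (Module.Dual R A)).toLinearMap
    ∘ₗ map (map D.ιV D.cop)
        (LinearMap.id : Module.Dual R A →ₗ[R] Module.Dual R A)
    ∘ₗ TensorProduct.mk R (Module.Dual R A ⊗[R] A) (Module.Dual R A) D.tcoev1

/-- the coproduct component `A^∨[1] → A^∨[1] ⊗ A^∨[1]`:  `(s⊗s)μ^∨ω`, using the Koszul
identification `(A⊗A)^∨ ≅ A^∨ ⊗ A^∨` -/
noncomputable def coVV (pe po : A →ₗ[R] A) :
    Module.Dual R A →ₗ[R] Module.Dual R A ⊗[R] Module.Dual R A :=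
  map D.ιV (LinearMap.id : Module.Dual R A →ₗ[R] Module.Dual R A)
    ∘ₗ D.kVV pe po
    ∘ₗ (TensorProduct.dualDistribEquiv R A A).symm.toLinearMap
    ∘ₗ D.mul.dualMap

/-- the Drinfel'd double coproduct `𝛌` on `D(A) = A ⊕ A^∨[1]`; the components
`A → A^∨[1] ⊗ A^∨[1]` and `A^∨[1] → A ⊗ A` vanish. -/
noncomputable def dcop (pe po : A →ₗ[R] A) :
    (A × Module.Dual R A) →ₗ[R]
      (A × Module.Dual R A) ⊗[R] (A × Module.Dual R A) :=
  map (LinearMap.inl R A (Module.Dual R A)) (LinearMap.inl R A (Module.Dual R A))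
      ∘ₗ D.cop ∘ₗ LinearMap.fst R A (Module.Dual R A)
  + map (LinearMap.inl R A (Module.Dual R A)) (LinearMap.inr R A (Module.Dual R A))
      ∘ₗ D.coAAV ∘ₗ LinearMap.fst R A (Module.Dual R A)
  + map (LinearMap.inr R A (Module.Dual R A)) (LinearMap.inl R A (Module.Dual R A))
      ∘ₗ D.coAVA ∘ₗ LinearMap.fst R A (Module.Dual R A)
  + map (LinearMap.inr R A (Module.Dual R A)) (LinearMap.inr R A (Module.Dual R A))
      ∘ₗ D.coVV pe po ∘ₗ LinearMap.snd R A (Module.Dual R A)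
  + map (LinearMap.inl R A (Module.Dual R A)) (LinearMap.inr R A (Module.Dual R A))
      ∘ₗ D.coVAV ∘ₗ LinearMap.snd R A (Module.Dual R A)
  + map (LinearMap.inr R A (Module.Dual R A)) (LinearMap.inl R A (Module.Dual R A))
      ∘ₗ D.coVVA ∘ₗ LinearMap.snd R A (Module.Dual R A)

/-- the counit `𝛆 ∈ D(A)^∨`, `𝛆(a + α) = ev(η ⊗ ωα) = (ωα)(η(1))` -/
noncomputable def deps : (A × Module.Dual R A) →ₗ[R] R :=
  Module.Dual.eval R A D.e ∘ₗ LinearMap.snd R A (Module.Dual R A)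

end BVData


section Aux
open TensorProduct LinearMap
variable {R : Type*} [Field R] {A : Type*} [AddCommGroup A] [Module R A]
variable [FiniteDimensional R A]

theorem sum_coord_apply {M : Type*} [AddCommGroup M] [Module R M] (F : A →ₗ[R] M) (x : A) :
    ∑ i : Module.Basis.ofVectorSpaceIndex R A,
      (Module.Basis.ofVectorSpace R A).coord i x • F ((Module.Basis.ofVectorSpace R A) i) = F x := by
  calc ∑ i : Module.Basis.ofVectorSpaceIndex R A,
      (Module.Basis.ofVectorSpace R A).coord i x • F ((Module.Basis.ofVectorSpace R A) i)
      = F (∑ i : Module.Basis.ofVectorSpaceIndex R A,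
        (Module.Basis.ofVectorSpace R A).coord i x • (Module.Basis.ofVectorSpace R A) i) := by
        rw [map_sum]; simp only [map_smul]
    _ = F x := by
        congr 1
        simpa [Module.Basis.coord_apply] using (Module.Basis.ofVectorSpace R A).sum_repr x

variable (D : BVData R A)

theorem claimL1 (h : IsBVui D) (a : A) :
    (TensorProduct.lid R (A × Module.Dual R A))
      ((map D.deps (LinearMap.id))
        ((map (LinearMap.inr R A (Module.Dual R A)) (LinearMap.inl R A (Module.Dual R A)))
          (D.coAVA a)))
    = (a, 0) := by
  simp only [BVData.coAVA, BVData.tcoev1, coevaluation_apply_one, LinearMap.comp_apply,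
    map_sum, TensorProduct.map_tmul, TensorProduct.comm_tmul, LinearMap.id_coe, id_eq,
    TensorProduct.mk_apply, sum_tmul, LinearEquiv.coe_coe, TensorProduct.assoc_tmul,
    TensorProduct.lid_tmul, BVData.deps, LinearMap.coe_comp, Function.comp_apply,
    LinearMap.snd_apply, LinearMap.inr_apply, Module.Dual.eval_apply,
    LinearMap.coe_sum, Finset.sum_apply]
  have := sum_coord_apply (F := LinearMap.inl R A (Module.Dual R A) ∘ₗ D.mul
    ∘ₗ ((TensorProduct.mk R A A).flip a) ∘ₗ D.ι) D.e
  simp only [LinearMap.comp_apply, LinearMap.flip_apply, TensorProduct.mk_apply] at this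
  rw [this, h.unit_even, h.unit_mul]
  rfl

theorem vanishL {N : Type*} [AddCommGroup N] [Module R N]
    (g : N →ₗ[R] A × Module.Dual R A) (u : A ⊗[R] N) :
    (TensorProduct.lid R (A × Module.Dual R A))
      ((map D.deps (LinearMap.id))
        ((map (LinearMap.inl R A (Module.Dual R A)) g) u)) = 0 := by
  induction u using TensorProduct.induction_on with
  | zero => simp
  | tmul m n => simp [BVData.deps]
  | add s t hs ht => simp only [map_add, hs, ht, add_zero]

theorem vanishR {M : Type*} [AddCommGroup M] [Module R M]
    (g : M →ₗ[R] A × Module.Dual R A) (u : M ⊗[R] A) :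
    (TensorProduct.rid R (A × Module.Dual R A))
      ((map D.ιW D.deps)
        ((map g (LinearMap.inl R A (Module.Dual R A))) u)) = 0 := by
  induction u using TensorProduct.induction_on with
  | zero => simp
  | tmul m n => simp [BVData.deps]
  | add s t hs ht => simp only [map_add, hs, ht, add_zero]

theorem dualDistrib_symm_apply (Y : Module.Dual R (A ⊗[R] A)) :
    TensorProduct.dualDistrib R A A ((TensorProduct.dualDistribEquiv R A A).symm Y) = Y :=
  (TensorProduct.dualDistribEquiv R A A).apply_symm_apply Y

theorem claimL2 (pe po : A →ₗ[R] A)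
    (hsum : pe + po = LinearMap.id)
    (hpe : pe ∘ₗ pe = pe) (hpo : po ∘ₗ po = po)
    (hpepo : pe ∘ₗ po = 0) (hpope : po ∘ₗ pe = 0)
    (hiota : D.ι = pe - po)
    (h : IsBVui D) (α : Module.Dual R A) :
    (TensorProduct.lid R (A × Module.Dual R A))
      ((map D.deps (LinearMap.id))
        ((map (LinearMap.inr R A (Module.Dual R A)) (LinearMap.inr R A (Module.Dual R A)))
          ((D.coVV pe po) α)))
    = (0, α) := by
  have hq2 : po D.e + po D.e = 0 := by
    have h1 : po (D.ι D.e) = po D.e := by rw [h.unit_even]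
    have h2 : po (D.ι D.e) = -(po D.e) := by
      rw [hiota]
      have := LinearMap.congr_fun hpope D.e
      have h3 := LinearMap.congr_fun hpo D.e
      simp only [LinearMap.comp_apply, LinearMap.zero_apply] at this h3
      simp [map_sub, this, h3]
    rw [h1] at h2
    exact eq_neg_iff_add_eq_zero.mp h2
  have key : ∀ X : Module.Dual R A ⊗[R] Module.Dual R A,
      (TensorProduct.lid R (A × Module.Dual R A))
        ((map D.deps (LinearMap.id))
          ((map (LinearMap.inr R A (Module.Dual R A)) (LinearMap.inr R A (Module.Dual R A)))
            ((map D.ιV (LinearMap.id)) (D.kVV pe po X))))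
      = (0, (TensorProduct.mk R A A D.e).dualMap (TensorProduct.dualDistrib R A A X)) := by
    intro X
    induction X using TensorProduct.induction_on with
    | zero => simp; rfl
    | tmul φ ψ =>
      simp only [BVData.kVV, LinearMap.add_apply, TensorProduct.map_tmul, map_add,
        LinearMap.id_coe, id_eq, BVData.ιV, BVData.deps, LinearMap.coe_comp,
        Function.comp_apply, LinearMap.snd_apply, LinearMap.inr_apply,
        Module.Dual.eval_apply, LinearMap.dualMap_apply, TensorProduct.lid_tmul,
        TensorProduct.dualDistrib_apply]
      refine Prod.ext (by simp) ?_
      refine LinearMap.ext fun x => ?_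
      simp only [LinearMap.add_apply, LinearMap.smul_apply, LinearMap.inr_apply,
        Prod.snd_add, Prod.smul_snd, LinearMap.dualMap_apply, LinearMap.comp_apply,
        TensorProduct.mk_apply, TensorProduct.dualDistrib_apply, smul_eq_mul,
        LinearEquiv.coe_coe]
      have h1 : φ (pe D.e) + φ (po D.e) = φ D.e := by
        have := LinearMap.congr_fun hsum D.e
        simp only [LinearMap.add_apply, LinearMap.id_apply] at this
        rw [← map_add, this]
      have h2 : φ (po D.e) + φ (po D.e) = 0 := by rw [← map_add, hq2, map_zero]
      have h3 : ψ (pe x) + ψ (po x) = ψ x := by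
        have := LinearMap.congr_fun hsum x
        simp only [LinearMap.add_apply, LinearMap.id_apply] at this
        rw [← map_add, this]
      have h4 : ψ (D.ι x) = ψ (pe x) - ψ (po x) := by rw [hiota]; simp [map_sub]
      have h5 : φ (pe (D.ι D.e)) = φ (pe D.e) := by rw [h.unit_even]
      have h6 : φ (po (D.ι D.e)) = φ (po D.e) := by rw [h.unit_even]
      rw [h4, h5, h6]
      linear_combination (ψ x) * h1 + (φ (po D.e)) * h3 - (ψ (po x)) * h2
    | add s t hs ht => simp only [map_add, hs, ht, Prod.mk_add_mk, add_zero]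
  have heq : (D.coVV pe po) α = (map D.ιV (LinearMap.id))
      (D.kVV pe po ((TensorProduct.dualDistribEquiv R A A).symm (D.mul.dualMap α))) := by
    simp [BVData.coVV]
  rw [heq, key, dualDistrib_symm_apply]
  refine Prod.ext rfl ?_
  refine LinearMap.ext fun b => ?_
  simp [LinearMap.dualMap_apply, h.unit_mul]

theorem claimL3 (h : IsBVui D) (hc : D.cop D.e = 0) (α : Module.Dual R A) :
    (TensorProduct.lid R (A × Module.Dual R A))
      ((map D.deps (LinearMap.id))
        ((map (LinearMap.inr R A (Module.Dual R A)) (LinearMap.inl R A (Module.Dual R A)))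
          (D.coVVA α)))
    = 0 := by
  simp only [BVData.coVVA, BVData.tcoev1, coevaluation_apply_one, LinearMap.comp_apply,
    map_sum, TensorProduct.map_tmul, TensorProduct.comm_tmul, LinearMap.id_coe, id_eq,
    TensorProduct.mk_apply, sum_tmul, LinearEquiv.coe_coe, TensorProduct.assoc_tmul,
    TensorProduct.lid_tmul, BVData.deps, LinearMap.coe_comp, Function.comp_apply,
    LinearMap.snd_apply, LinearMap.inr_apply, Module.Dual.eval_apply,
    LinearMap.coe_sum, Finset.sum_apply, BVData.ιV, LinearMap.dualMap_apply,
    h.unit_even]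
  set G := (TensorProduct.rid R A).toLinearMap
        ∘ₗ map (LinearMap.id : A →ₗ[R] A) D.evt
        ∘ₗ (TensorProduct.assoc R A A (Module.Dual R A)).toLinearMap with hG
  have := sum_coord_apply (F := LinearMap.inl R A (Module.Dual R A) ∘ₗ G
    ∘ₗ ((TensorProduct.mk R (A ⊗[R] A) (Module.Dual R A)).flip α) ∘ₗ D.cop ∘ₗ D.ι) D.e
  simp only [LinearMap.comp_apply, LinearMap.flip_apply, TensorProduct.mk_apply, hG,
    LinearEquiv.coe_coe] at this
  rw [this, h.unit_even, hc]
  simp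

theorem claimR1 (h : IsBVui D) (a : A) :
    (TensorProduct.rid R (A × Module.Dual R A))
      ((map D.ιW D.deps)
        ((map (LinearMap.inl R A (Module.Dual R A)) (LinearMap.inr R A (Module.Dual R A)))
          (D.coAAV a)))
    = (-a, 0) := by
  simp only [BVData.coAAV, coevaluation_apply_one, LinearMap.comp_apply,
    map_sum, TensorProduct.map_tmul, LinearMap.id_coe, id_eq, LinearMap.flip_apply,
    TensorProduct.mk_apply, tmul_sum, LinearEquiv.coe_coe, TensorProduct.assoc_symm_tmul,
    TensorProduct.rid_tmul, BVData.deps, BVData.ιW, LinearMap.coe_comp, Function.comp_apply,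
    LinearMap.snd_apply, LinearMap.inr_apply, LinearMap.inl_apply, Module.Dual.eval_apply,
    LinearMap.coe_sum, Finset.sum_apply, LinearMap.neg_apply, LinearMap.prodMap_apply,
    Prod.mk.injEq, map_neg, map_zero, neg_zero]
  have := sum_coord_apply (F := -(LinearMap.inl R A (Module.Dual R A) ∘ₗ D.ι ∘ₗ D.ι
    ∘ₗ D.mul ∘ₗ (TensorProduct.mk R A A a))) D.e
  simp only [LinearMap.comp_apply, LinearMap.neg_apply, TensorProduct.mk_apply,
    smul_neg, LinearMap.inl_apply] at this ⊢
  rw [this]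
  have hii := LinearMap.congr_fun h.invol (D.mul (a ⊗ₜ[R] D.e))
  simp only [LinearMap.comp_apply, LinearMap.id_apply] at hii
  rw [hii, h.mul_unit]
  simp

theorem claimR2 (pe po : A →ₗ[R] A)
    (hsum : pe + po = LinearMap.id)
    (hpe : pe ∘ₗ pe = pe) (hpo : po ∘ₗ po = po)
    (hpepo : pe ∘ₗ po = 0) (hpope : po ∘ₗ pe = 0)
    (hiota : D.ι = pe - po)
    (h : IsBVui D) (α : Module.Dual R A) :
    (TensorProduct.rid R (A × Module.Dual R A))
      ((map D.ιW D.deps)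
        ((map (LinearMap.inr R A (Module.Dual R A)) (LinearMap.inr R A (Module.Dual R A)))
          ((D.coVV pe po) α)))
    = (0, -α) := by
  have hιVinvol : ∀ φ : Module.Dual R A, D.ιV (D.ιV φ) = φ := by
    intro φ
    refine LinearMap.ext fun x => ?_
    have := LinearMap.congr_fun h.invol x
    simp only [LinearMap.comp_apply, LinearMap.id_apply] at this
    simp [BVData.ιV, LinearMap.dualMap_apply, this]
  have key : ∀ X : Module.Dual R A ⊗[R] Module.Dual R A,
      (TensorProduct.rid R (A × Module.Dual R A))
        ((map D.ιW D.deps)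
          ((map (LinearMap.inr R A (Module.Dual R A)) (LinearMap.inr R A (Module.Dual R A)))
            ((map D.ιV (LinearMap.id)) (D.kVV pe po X))))
      = (0, -(((TensorProduct.mk R A A).flip D.e).dualMap
          (TensorProduct.dualDistrib R A A X))) := by
    intro X
    induction X using TensorProduct.induction_on with
    | zero => simp; rfl
    | tmul φ ψ =>
      simp only [BVData.kVV, LinearMap.add_apply, TensorProduct.map_tmul, map_add,
        LinearMap.id_coe, id_eq, BVData.deps, BVData.ιW, LinearMap.coe_comp,
        Function.comp_apply, LinearMap.snd_apply, LinearMap.inr_apply,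
        Module.Dual.eval_apply, TensorProduct.rid_tmul,
        LinearMap.prodMap_apply, LinearMap.neg_apply, map_zero,
        TensorProduct.dualDistrib_apply]
      refine Prod.ext (by simp) ?_
      refine LinearMap.ext fun x => ?_
      have h1 : φ (pe x) + φ (po x) = φ x := by
        have := LinearMap.congr_fun hsum x
        simp only [LinearMap.add_apply, LinearMap.id_apply] at this
        rw [← map_add, this]
      have h2 : (D.ιV ψ) D.e = ψ D.e := by
        simp [BVData.ιV, LinearMap.dualMap_apply, h.unit_even]
      simp only [Prod.snd_add, Prod.smul_snd, LinearMap.add_apply, LinearMap.smul_apply,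
        LinearMap.neg_apply, LinearMap.dualMap_apply, LinearMap.comp_apply,
        LinearMap.flip_apply, TensorProduct.mk_apply, TensorProduct.dualDistrib_apply,
        smul_eq_mul, LinearEquiv.coe_coe, h2, hιVinvol, Prod.snd_neg]
      have h3 : (D.ιV (pe.dualMap φ)) x = φ (pe (D.ι x)) := by
        simp [BVData.ιV, LinearMap.dualMap_apply]
      have h4 : (D.ιV (po.dualMap φ)) x = φ (po (D.ι x)) := by
        simp [BVData.ιV, LinearMap.dualMap_apply]
      have h5 : pe (D.ι x) = pe x := by
        rw [hiota]
        have h6 := LinearMap.congr_fun hpepo x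
        have h7 := LinearMap.congr_fun hpe x
        simp only [LinearMap.comp_apply, LinearMap.zero_apply] at h6 h7
        simp [map_sub, h6, h7]
      have h8 : po (D.ι x) = -(po x) := by
        rw [hiota]
        have h6 := LinearMap.congr_fun hpope x
        have h7 := LinearMap.congr_fun hpo x
        simp only [LinearMap.comp_apply, LinearMap.zero_apply] at h6 h7
        simp [map_sub, h6, h7]
      linear_combination (-(ψ D.e)) * h1
    | add s t hs ht => simp only [map_add, hs, ht, Prod.mk_add_mk, add_zero, neg_add]
  have heq : (D.coVV pe po) α = (map D.ιV (LinearMap.id))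
      (D.kVV pe po ((TensorProduct.dualDistribEquiv R A A).symm (D.mul.dualMap α))) := by
    simp [BVData.coVV]
  rw [heq, key, dualDistrib_symm_apply]
  refine Prod.ext rfl ?_
  refine LinearMap.ext fun b => ?_
  simp [LinearMap.dualMap_apply, h.mul_unit]

theorem contract_helper (φ ψ : Module.Dual R A) (t : A ⊗[R] A) :
    (map D.ι (LinearMap.id : Module.Dual R A →ₗ[R] Module.Dual R A))
      ((TensorProduct.lid R (A ⊗[R] Module.Dual R A))
        ((map (contractLeft R A)
            (LinearMap.id : A ⊗[R] Module.Dual R A →ₗ[R] A ⊗[R] Module.Dual R A))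
          ((TensorProduct.assoc R (Module.Dual R A) A (A ⊗[R] Module.Dual R A)).symm
            (φ ⊗ₜ[R] ((TensorProduct.assoc R A A (Module.Dual R A)) (t ⊗ₜ[R] ψ))))))
    = ((TensorProduct.lid R A) ((map φ D.ι) t)) ⊗ₜ[R] ψ := by
  induction t using TensorProduct.induction_on with
  | zero => simp
  | tmul x y =>
    simp [TensorProduct.assoc_tmul, TensorProduct.assoc_symm_tmul, contractLeft_apply,
      TensorProduct.lid_tmul, smul_tmul']
  | add s t hs ht =>
    simp only [add_tmul, map_add, tmul_add, hs, ht]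

theorem claimR3 (h : IsBVui D) (hc : D.cop D.e = 0) (α : Module.Dual R A) :
    (TensorProduct.rid R (A × Module.Dual R A))
      ((map D.ιW D.deps)
        ((map (LinearMap.inl R A (Module.Dual R A)) (LinearMap.inr R A (Module.Dual R A)))
          (D.coVAV α)))
    = 0 := by
  simp only [BVData.coVAV, coevaluation_apply_one, LinearMap.comp_apply,
    map_sum, TensorProduct.map_tmul, LinearMap.id_coe, id_eq, LinearMap.flip_apply,
    TensorProduct.mk_apply, tmul_sum, LinearEquiv.coe_coe,
    LinearMap.coe_sum, Finset.sum_apply]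
  simp only [contract_helper, TensorProduct.map_tmul, BVData.deps, BVData.ιW,
    LinearMap.coe_comp, Function.comp_apply, LinearMap.snd_apply, LinearMap.inr_apply,
    LinearMap.inl_apply, Module.Dual.eval_apply, TensorProduct.rid_tmul,
    LinearMap.prodMap_apply, LinearMap.id_coe, id_eq, map_sum, map_zero,
    LinearMap.neg_apply, neg_zero]
  have := sum_coord_apply (F := LinearMap.inl R A (Module.Dual R A) ∘ₗ D.ι
    ∘ₗ (TensorProduct.lid R A).toLinearMap
    ∘ₗ (TensorProduct.map (D.ιV α) D.ι) ∘ₗ D.cop) D.e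
  simp only [LinearMap.comp_apply, LinearEquiv.coe_toLinearMap, LinearMap.inl_apply] at this
  rw [this, hc]
  simp

end Aux

/-- In the Drinfel'd double `D(A) = A ⊕ A^∨[1]` of a finite-dimensional
odd BV unital infinitesimal bialgebra with `λη = 0` (and `|λ| = -1`), the element
`𝛆 ∈ D(A)^∨` defined by `𝛆(a + α) = ev(η ⊗ ωα)` is a counit for the double coproduct
`𝛌`:  `(𝛆⊗1)𝛌 = 1` and `(1⊗𝛆)𝛌 = -1`. -/
theorem double_counit (D : BVData R A) [FiniteDimensional R A]
    (pe po : A →ₗ[R] A)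
    (hsum : pe + po = LinearMap.id)
    (hpe : pe ∘ₗ pe = pe) (hpo : po ∘ₗ po = po)
    (hpepo : pe ∘ₗ po = 0) (hpope : po ∘ₗ pe = 0)
    (hiota : D.ι = pe - po)
    (h : IsBVui D) (hcopair_zero : D.copair = 0) :
    (TensorProduct.lid R (A × Module.Dual R A)).toLinearMap
        ∘ₗ map D.deps
            (LinearMap.id : A × Module.Dual R A →ₗ[R] A × Module.Dual R A)
        ∘ₗ D.dcop pe po = LinearMap.id
    ∧ (TensorProduct.rid R (A × Module.Dual R A)).toLinearMap
        ∘ₗ map D.ιW D.deps ∘ₗ D.dcop pe po = -LinearMap.id := by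
  have hce : D.cop D.e = 0 := hcopair_zero
  constructor
  · refine LinearMap.ext fun x => ?_
    simp only [LinearMap.comp_apply, BVData.dcop, LinearMap.add_apply, LinearEquiv.coe_coe,
      LinearMap.fst_apply, LinearMap.snd_apply, map_add]
    rw [vanishL D _ _, vanishL D _ _, claimL1 D h x.1,
      claimL2 D pe po hsum hpe hpo hpepo hpope hiota h x.2,
      vanishL D _ _, claimL3 D h hce x.2]
    simp only [LinearMap.id_apply, zero_add, add_zero]
    exact Prod.ext (by simp) (by simp)
  · refine LinearMap.ext fun x => ?_
    simp only [LinearMap.comp_apply, BVData.dcop, LinearMap.add_apply, LinearEquiv.coe_coe,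
      LinearMap.fst_apply, LinearMap.snd_apply, map_add]
    rw [vanishR D _ _, claimR1 D h x.1, vanishR D _ _,
      claimR2 D pe po hsum hpe hpo hpepo hpope hiota h x.2,
      claimR3 D h hce x.2, vanishR D _ _]
    simp only [LinearMap.neg_apply, LinearMap.id_apply, zero_add, add_zero]
    exact Prod.ext (by simp) (by simp)
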